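/- Every operator of the U_q(gl(N)) representation commutes with every operator of the dual U_{q̃}(gl(N)) representation: for all X, Y ranging over the generators {K_n (1 ≤ n ≤ N), E_{n,n+1}, E_{n+1,n} (1 ≤ n ≤ N−1)}, one has ϱ(X) ϱ̃(Y) = ϱ̃(Y) ϱ(X), as an identity of operators applied to any function f : ℂ^Γ → ℂ at every point γ at which all sinh-denominators occurring on either side (including those at shifted arguments) are nonzero. -/
import Mathlib


noncomputable section

open Finset

/-- A point of the variable space: an assignment of a complex number to each
index pair `(n, j)` (with `γ (N, j)` playing the role of the fixed top-level
parameters). -/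
abbrev Pt : Type := ℕ × ℕ → ℂ

/-- Operators acting on functions of the variables. -/
abbrev Op : Type := (Pt → ℂ) → (Pt → ℂ)

/-- Shift the coordinate `γ (n, j)` by `c`. -/
def shift (n j : ℕ) (c : ℂ) (γ : Pt) : Pt :=
  fun p => if p = (n, j) then γ p + c else γ p

/-- The quantum deformation parameter `q = exp(2πiω₁/ω₂)`. -/
def qpar (w1 w2 : ℂ) : ℂ := Complex.exp (2 * (Real.pi : ℂ) * Complex.I * w1 / w2)

/-- The multiplier of the Cartan operator `ϱ(K_n)`. -/
def kfac (w2 : ℂ) (n : ℕ) (γ : Pt) : ℂ :=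
  Complex.exp ((2 * (Real.pi : ℂ) / w2) *
    ((∑ j ∈ Finset.Icc 1 n, γ (n, j)) - ∑ j ∈ Finset.Icc 1 (n - 1), γ (n - 1, j)))

/-- The Cartan operator `ϱ(K_n)`. -/
def qK (w2 : ℂ) (n : ℕ) : Op := fun f γ => kfac w2 n γ * f γ

/-- The inverse Cartan operator `ϱ(K_n)⁻¹`. -/
def qKinv (w2 : ℂ) (n : ℕ) : Op := fun f γ => (kfac w2 n γ)⁻¹ * f γ

/-- The raising operator `ϱ(E_{n,n+1})`. -/
def qE (w1 w2 : ℂ) (n : ℕ) : Op := fun f γ =>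
  (2 * Complex.I * Complex.exp ((Real.pi : ℂ) * Complex.I * w1 * ((n : ℂ) - 1) / w2) /
      Complex.sin (2 * (Real.pi : ℂ) * w1 / w2)) *
    ∑ j ∈ Finset.Icc 1 n,
      ((∏ r ∈ Finset.Icc 1 (n + 1),
            Complex.sinh ((2 * (Real.pi : ℂ) / w2) *
              (γ (n, j) - γ (n + 1, r) - Complex.I * w1 / 2))) /
          ∏ s ∈ (Finset.Icc 1 n).erase j,
            Complex.sinh ((2 * (Real.pi : ℂ) / w2) * (γ (n, j) - γ (n, s)))) *
        f (shift n j (-(Complex.I * w1)) γ)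

/-- The lowering operator `ϱ(E_{n+1,n})`. -/
def qF (w1 w2 : ℂ) (n : ℕ) : Op := fun f γ =>
  -(Complex.I * Complex.exp (-((Real.pi : ℂ) * Complex.I * w1 * ((n : ℂ) - 1)) / w2) /
      (2 * Complex.sin (2 * (Real.pi : ℂ) * w1 / w2))) *
    ∑ j ∈ Finset.Icc 1 n,
      ((∏ r ∈ Finset.Icc 1 (n - 1),
            Complex.sinh ((2 * (Real.pi : ℂ) / w2) *
              (γ (n, j) - γ (n - 1, r) + Complex.I * w1 / 2))) /
          ∏ s ∈ (Finset.Icc 1 n).erase j,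
            Complex.sinh ((2 * (Real.pi : ℂ) / w2) * (γ (n, j) - γ (n, s)))) *
        f (shift n j (Complex.I * w1) γ)

/-- Genericity: all sinh-denominators, also at arguments shifted by `iω₁·a` with
`|a| ≤ d`, are nonzero. -/
def QGeneric (N : ℕ) (w1 w2 : ℂ) (d : ℕ) (γ : Pt) : Prop :=
  ∀ m j s, 1 ≤ m → m ≤ N → 1 ≤ j → j ≤ m → 1 ≤ s → s ≤ m → j ≠ s →
    ∀ a : ℤ, a.natAbs ≤ d →
      Complex.sinh ((2 * (Real.pi : ℂ) / w2) *
        (γ (m, j) - γ (m, s) + Complex.I * w1 * (a : ℂ))) ≠ 0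

/-- The multiplier of the dual Cartan operator `ϱ̃(K_n)`. -/
def kfacd (w1 : ℂ) (n : ℕ) (γ : Pt) : ℂ :=
  Complex.exp (-((2 * (Real.pi : ℂ) / w1) *
    ((∑ j ∈ Finset.Icc 1 n, γ (n, j)) - ∑ j ∈ Finset.Icc 1 (n - 1), γ (n - 1, j))))

/-- The dual Cartan operator `ϱ̃(K_n)`. -/
def qKd (w1 : ℂ) (n : ℕ) : Op := fun f γ => kfacd w1 n γ * f γ

/-- The dual raising operator `ϱ̃(E_{n,n+1})`. -/
def qEd (w1 w2 : ℂ) (n : ℕ) : Op := fun f γ =>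
  -(2 * Complex.I * Complex.exp (-((Real.pi : ℂ) * Complex.I * w2 * ((n : ℂ) - 1)) / w1) /
      Complex.sin (2 * (Real.pi : ℂ) * w2 / w1)) *
    ∑ j ∈ Finset.Icc 1 n,
      ((∏ r ∈ Finset.Icc 1 (n + 1),
            Complex.sinh ((2 * (Real.pi : ℂ) / w1) *
              (γ (n, j) - γ (n + 1, r) - Complex.I * w2 / 2))) /
          ∏ s ∈ (Finset.Icc 1 n).erase j,
            Complex.sinh ((2 * (Real.pi : ℂ) / w1) * (γ (n, j) - γ (n, s)))) *
        f (shift n j (-(Complex.I * w2)) γ)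

/-- The dual lowering operator `ϱ̃(E_{n+1,n})`. -/
def qFd (w1 w2 : ℂ) (n : ℕ) : Op := fun f γ =>
  (Complex.I * Complex.exp ((Real.pi : ℂ) * Complex.I * w2 * ((n : ℂ) - 1) / w1) /
      (2 * Complex.sin (2 * (Real.pi : ℂ) * w2 / w1))) *
    ∑ j ∈ Finset.Icc 1 n,
      ((∏ r ∈ Finset.Icc 1 (n - 1),
            Complex.sinh ((2 * (Real.pi : ℂ) / w1) *
              (γ (n, j) - γ (n - 1, r) + Complex.I * w2 / 2))) /
          ∏ s ∈ (Finset.Icc 1 n).erase j,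
            Complex.sinh ((2 * (Real.pi : ℂ) / w1) * (γ (n, j) - γ (n, s)))) *
        f (shift n j (Complex.I * w2) γ)

/-- `X` is one of the generators of the `U_q(gl(N))` representation `ϱ`. -/
def IsGen (N : ℕ) (w1 w2 : ℂ) (X : Op) : Prop :=
  (∃ n, 1 ≤ n ∧ n ≤ N ∧ X = qK w2 n) ∨
  (∃ n, 1 ≤ n ∧ n ≤ N - 1 ∧ X = qE w1 w2 n) ∨
  (∃ n, 1 ≤ n ∧ n ≤ N - 1 ∧ X = qF w1 w2 n)

/-- `Y` is one of the generators of the dual `U_{q̃}(gl(N))` representation `ϱ̃`. -/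
def IsGenD (N : ℕ) (w1 w2 : ℂ) (Y : Op) : Prop :=
  (∃ n, 1 ≤ n ∧ n ≤ N ∧ Y = qKd w1 n) ∨
  (∃ n, 1 ≤ n ∧ n ≤ N - 1 ∧ Y = qEd w1 w2 n) ∨
  (∃ n, 1 ≤ n ∧ n ≤ N - 1 ∧ Y = qFd w1 w2 n)

/-- Genericity for both scales: all sinh-denominators, also at arguments shifted
by `iω₁·a + iω₂·b` with `|a|, |b| ≤ 1`, are nonzero. -/
def QGeneric2 (N : ℕ) (w1 w2 : ℂ) (γ : Pt) : Prop :=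
  ∀ m j s, 1 ≤ m → m ≤ N → 1 ≤ j → j ≤ m → 1 ≤ s → s ≤ m → j ≠ s →
    ∀ a b : ℤ, a.natAbs ≤ 1 → b.natAbs ≤ 1 →
      Complex.sinh ((2 * (Real.pi : ℂ) / w2) *
          (γ (m, j) - γ (m, s) + Complex.I * w1 * (a : ℂ) + Complex.I * w2 * (b : ℂ))) ≠ 0 ∧
      Complex.sinh ((2 * (Real.pi : ℂ) / w1) *
          (γ (m, j) - γ (m, s) + Complex.I * w1 * (a : ℂ) + Complex.I * w2 * (b : ℂ))) ≠ 0


/-! ### Auxiliary machinery -/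

lemma shift_zero (n j : ℕ) (γ : Pt) : shift n j 0 γ = γ := by
  funext p; simp [shift]

lemma shift_comm (n j m k : ℕ) (c c' : ℂ) (γ : Pt) :
    shift n j c (shift m k c' γ) = shift m k c' (shift n j c γ) := by
  funext p; simp only [shift]; split <;> split <;> ring

lemma exp_per (w : ℂ) (hw : w ≠ 0) {x y : ℂ} (t : ℤ) (h : y = x + Complex.I * w * (t : ℂ)) :
    Complex.exp ((2 * (Real.pi : ℂ) / w) * y) = Complex.exp ((2 * (Real.pi : ℂ) / w) * x) := by
  subst h
  rw [mul_add, Complex.exp_add]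
  have : (2 * (Real.pi : ℂ) / w) * (Complex.I * w * (t : ℂ))
      = (t : ℂ) * (2 * (Real.pi : ℂ) * Complex.I) := by
    field_simp
  rw [this, Complex.exp_int_mul_two_pi_mul_I, mul_one]

lemma sinh_per (w : ℂ) (hw : w ≠ 0) {x y : ℂ} (t : ℤ) (h : y = x + Complex.I * w * (t : ℂ)) :
    Complex.sinh ((2 * (Real.pi : ℂ) / w) * y) = Complex.sinh ((2 * (Real.pi : ℂ) / w) * x) := by
  have h1 := exp_per w hw t h
  have h2 : Complex.exp ((2 * (Real.pi : ℂ) / w) * (-y))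
      = Complex.exp ((2 * (Real.pi : ℂ) / w) * (-x)) :=
    exp_per w hw (-t) (by push_cast; linear_combination -h)
  rw [Complex.sinh, Complex.sinh,
    show -((2 * (Real.pi : ℂ) / w) * y) = (2 * (Real.pi : ℂ) / w) * (-y) by ring,
    show -((2 * (Real.pi : ℂ) / w) * x) = (2 * (Real.pi : ℂ) / w) * (-x) by ring,
    h1, h2]

lemma shift_diff (p1 p2 : ℕ) (v : ℂ) (γ : Pt) (a b : ℕ × ℕ) :
    ∃ ε : ℤ, shift p1 p2 v γ a - shift p1 p2 v γ b = γ a - γ b + (ε : ℂ) * v := by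
  simp only [shift]
  by_cases ha : a = (p1, p2) <;> by_cases hb : b = (p1, p2)
  · exact ⟨0, by simp [ha, hb]⟩
  · exact ⟨1, by simp [ha, hb]; ring⟩
  · exact ⟨-1, by simp [ha, hb]; push_cast; ring⟩
  · exact ⟨0, by simp [ha, hb]⟩

lemma sum_shift (p1 p2 m : ℕ) (v : ℂ) (γ : Pt) :
    ∃ ε : ℤ, (∑ j ∈ Finset.Icc 1 m, shift p1 p2 v γ (m, j))
      = (∑ j ∈ Finset.Icc 1 m, γ (m, j)) + (ε : ℂ) * v := by
  by_cases hm : p1 = m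
  · by_cases hp : p2 ∈ Finset.Icc 1 m
    · refine ⟨1, ?_⟩
      rw [← Finset.sum_erase_add _ _ hp, ← Finset.sum_erase_add _ (fun j => γ (m, j)) hp]
      have h1 : ∀ j ∈ (Finset.Icc 1 m).erase p2, shift p1 p2 v γ (m, j) = γ (m, j) := by
        intro j hj
        have := Finset.ne_of_mem_erase hj
        simp [shift, Prod.ext_iff, this]
      rw [Finset.sum_congr rfl h1]
      simp [shift, hm.symm]; ring
    · refine ⟨0, ?_⟩
      rw [Int.cast_zero, zero_mul, add_zero]
      refine Finset.sum_congr rfl fun j hj => ?_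
      have : j ≠ p2 := fun h => hp (h ▸ hj)
      simp [shift, Prod.ext_iff, this]
  · refine ⟨0, ?_⟩
    rw [Int.cast_zero, zero_mul, add_zero]
    refine Finset.sum_congr rfl fun j hj => ?_
    simp [shift, Prod.ext_iff, Ne.symm hm]

/-- A generic operator of the shape shared by all generators. -/
def genOp (c : ℂ) (A : ℕ → Pt → ℂ) (n : ℕ) (u : ℂ) : Op :=
  fun f γ => c * ∑ j ∈ Finset.Icc 1 n, A j γ * f (shift n j u γ)

lemma genOp_comm (c d : ℂ) (A B : ℕ → Pt → ℂ) (n m : ℕ) (u v : ℂ)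
    (hA : ∀ j p1 p2 δ, A j (shift p1 p2 v δ) = A j δ)
    (hB : ∀ k p1 p2 δ, B k (shift p1 p2 u δ) = B k δ)
    (f : Pt → ℂ) (γ : Pt) :
    genOp c A n u (genOp d B m v f) γ = genOp d B m v (genOp c A n u f) γ := by
  simp only [genOp, hA, hB, Finset.mul_sum]
  rw [Finset.sum_comm]
  refine Finset.sum_congr rfl fun k hk => Finset.sum_congr rfl fun j hj => ?_
  rw [shift_comm n j m k u v γ]
  ring

lemma kfac_shift {w2 : ℂ} (h2 : w2 ≠ 0) (n p1 p2 : ℕ) (s : ℤ) (γ : Pt) :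
    kfac w2 n (shift p1 p2 (Complex.I * w2 * (s : ℂ)) γ) = kfac w2 n γ := by
  obtain ⟨ε1, h1⟩ := sum_shift p1 p2 n (Complex.I * w2 * (s : ℂ)) γ
  obtain ⟨ε2, hh2⟩ := sum_shift p1 p2 (n - 1) (Complex.I * w2 * (s : ℂ)) γ
  exact exp_per w2 h2 ((ε1 - ε2) * s) (by push_cast; linear_combination h1 - hh2)

lemma kfacd_shift {w1 : ℂ} (h1 : w1 ≠ 0) (n p1 p2 : ℕ) (s : ℤ) (γ : Pt) :
    kfacd w1 n (shift p1 p2 (Complex.I * w1 * (s : ℂ)) γ) = kfacd w1 n γ := by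
  obtain ⟨ε1, hs1⟩ := sum_shift p1 p2 n (Complex.I * w1 * (s : ℂ)) γ
  obtain ⟨ε2, hs2⟩ := sum_shift p1 p2 (n - 1) (Complex.I * w1 * (s : ℂ)) γ
  unfold kfacd
  rw [neg_mul_eq_mul_neg, neg_mul_eq_mul_neg]
  exact exp_per w1 h1 (-((ε1 - ε2) * s)) (by push_cast; linear_combination hs2 - hs1)

lemma repGen {N : ℕ} {w1 w2 : ℂ} (h2 : w2 ≠ 0) {X : Op} (hX : IsGen N w1 w2 X) :
    ∃ c A n u, X = genOp c A n u ∧ (∃ t : ℤ, u = Complex.I * w1 * (t : ℂ)) ∧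
      (∀ (s : ℤ) j p1 p2 δ, A j (shift p1 p2 (Complex.I * w2 * (s : ℂ)) δ) = A j δ) := by
  rcases hX with ⟨n, -, -, rfl⟩ | ⟨n, -, -, rfl⟩ | ⟨n, -, -, rfl⟩
  · refine ⟨1, fun _ δ => kfac w2 n δ, 1, 0, ?_, ⟨0, by simp⟩,
      fun s j p1 p2 δ => kfac_shift h2 n p1 p2 s δ⟩
    funext f γ
    simp [qK, genOp, shift_zero]
  · refine ⟨2 * Complex.I * Complex.exp ((Real.pi : ℂ) * Complex.I * w1 * ((n : ℂ) - 1) / w2) /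
        Complex.sin (2 * (Real.pi : ℂ) * w1 / w2), fun j δ =>
      (∏ r ∈ Finset.Icc 1 (n + 1),
            Complex.sinh ((2 * (Real.pi : ℂ) / w2) *
              (δ (n, j) - δ (n + 1, r) - Complex.I * w1 / 2))) /
          ∏ s ∈ (Finset.Icc 1 n).erase j,
            Complex.sinh ((2 * (Real.pi : ℂ) / w2) * (δ (n, j) - δ (n, s))),
      n, -(Complex.I * w1), rfl, ⟨-1, by push_cast; ring⟩, ?_⟩
    intro s j p1 p2 δ
    refine congrArg₂ (· / ·) ?_ ?_
    · refine Finset.prod_congr rfl fun r hr => ?_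
      obtain ⟨ε, hε⟩ := shift_diff p1 p2 (Complex.I * w2 * (s : ℂ)) δ (n, j) (n + 1, r)
      exact sinh_per w2 h2 (ε * s) (by push_cast; linear_combination hε)
    · refine Finset.prod_congr rfl fun r hr => ?_
      obtain ⟨ε, hε⟩ := shift_diff p1 p2 (Complex.I * w2 * (s : ℂ)) δ (n, j) (n, r)
      exact sinh_per w2 h2 (ε * s) (by push_cast; linear_combination hε)
  · refine ⟨-(Complex.I * Complex.exp (-((Real.pi : ℂ) * Complex.I * w1 * ((n : ℂ) - 1)) / w2) /
        (2 * Complex.sin (2 * (Real.pi : ℂ) * w1 / w2))), fun j δ =>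
      (∏ r ∈ Finset.Icc 1 (n - 1),
            Complex.sinh ((2 * (Real.pi : ℂ) / w2) *
              (δ (n, j) - δ (n - 1, r) + Complex.I * w1 / 2))) /
          ∏ s ∈ (Finset.Icc 1 n).erase j,
            Complex.sinh ((2 * (Real.pi : ℂ) / w2) * (δ (n, j) - δ (n, s))),
      n, Complex.I * w1, rfl, ⟨1, by push_cast; ring⟩, ?_⟩
    intro s j p1 p2 δ
    refine congrArg₂ (· / ·) ?_ ?_
    · refine Finset.prod_congr rfl fun r hr => ?_
      obtain ⟨ε, hε⟩ := shift_diff p1 p2 (Complex.I * w2 * (s : ℂ)) δ (n, j) (n - 1, r)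
      exact sinh_per w2 h2 (ε * s) (by push_cast; linear_combination hε)
    · refine Finset.prod_congr rfl fun r hr => ?_
      obtain ⟨ε, hε⟩ := shift_diff p1 p2 (Complex.I * w2 * (s : ℂ)) δ (n, j) (n, r)
      exact sinh_per w2 h2 (ε * s) (by push_cast; linear_combination hε)

lemma repGenD {N : ℕ} {w1 w2 : ℂ} (h1 : w1 ≠ 0) {Y : Op} (hY : IsGenD N w1 w2 Y) :
    ∃ d B m v, Y = genOp d B m v ∧ (∃ t : ℤ, v = Complex.I * w2 * (t : ℂ)) ∧
      (∀ (s : ℤ) k p1 p2 δ, B k (shift p1 p2 (Complex.I * w1 * (s : ℂ)) δ) = B k δ) := by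
  rcases hY with ⟨n, -, -, rfl⟩ | ⟨n, -, -, rfl⟩ | ⟨n, -, -, rfl⟩
  · refine ⟨1, fun _ δ => kfacd w1 n δ, 1, 0, ?_, ⟨0, by simp⟩,
      fun s j p1 p2 δ => kfacd_shift h1 n p1 p2 s δ⟩
    funext f γ
    simp [qKd, genOp, shift_zero]
  · refine ⟨-(2 * Complex.I * Complex.exp (-((Real.pi : ℂ) * Complex.I * w2 * ((n : ℂ) - 1)) / w1) /
        Complex.sin (2 * (Real.pi : ℂ) * w2 / w1)), fun j δ =>
      (∏ r ∈ Finset.Icc 1 (n + 1),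
            Complex.sinh ((2 * (Real.pi : ℂ) / w1) *
              (δ (n, j) - δ (n + 1, r) - Complex.I * w2 / 2))) /
          ∏ s ∈ (Finset.Icc 1 n).erase j,
            Complex.sinh ((2 * (Real.pi : ℂ) / w1) * (δ (n, j) - δ (n, s))),
      n, -(Complex.I * w2), rfl, ⟨-1, by push_cast; ring⟩, ?_⟩
    intro s j p1 p2 δ
    refine congrArg₂ (· / ·) ?_ ?_
    · refine Finset.prod_congr rfl fun r hr => ?_
      obtain ⟨ε, hε⟩ := shift_diff p1 p2 (Complex.I * w1 * (s : ℂ)) δ (n, j) (n + 1, r)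
      exact sinh_per w1 h1 (ε * s) (by push_cast; linear_combination hε)
    · refine Finset.prod_congr rfl fun r hr => ?_
      obtain ⟨ε, hε⟩ := shift_diff p1 p2 (Complex.I * w1 * (s : ℂ)) δ (n, j) (n, r)
      exact sinh_per w1 h1 (ε * s) (by push_cast; linear_combination hε)
  · refine ⟨Complex.I * Complex.exp ((Real.pi : ℂ) * Complex.I * w2 * ((n : ℂ) - 1) / w1) /
        (2 * Complex.sin (2 * (Real.pi : ℂ) * w2 / w1)), fun j δ =>
      (∏ r ∈ Finset.Icc 1 (n - 1),
            Complex.sinh ((2 * (Real.pi : ℂ) / w1) *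
              (δ (n, j) - δ (n - 1, r) + Complex.I * w2 / 2))) /
          ∏ s ∈ (Finset.Icc 1 n).erase j,
            Complex.sinh ((2 * (Real.pi : ℂ) / w1) * (δ (n, j) - δ (n, s))),
      n, Complex.I * w2, rfl, ⟨1, by push_cast; ring⟩, ?_⟩
    intro s j p1 p2 δ
    refine congrArg₂ (· / ·) ?_ ?_
    · refine Finset.prod_congr rfl fun r hr => ?_
      obtain ⟨ε, hε⟩ := shift_diff p1 p2 (Complex.I * w1 * (s : ℂ)) δ (n, j) (n - 1, r)
      exact sinh_per w1 h1 (ε * s) (by push_cast; linear_combination hε)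
    · refine Finset.prod_congr rfl fun r hr => ?_
      obtain ⟨ε, hε⟩ := shift_diff p1 p2 (Complex.I * w1 * (s : ℂ)) δ (n, j) (n, r)
      exact sinh_per w1 h1 (ε * s) (by push_cast; linear_combination hε)

/-- every operator of the `U_q(gl(N))` representation commutes with
every operator of the dual `U_{q̃}(gl(N))` representation, pointwise wherever all
sinh-denominators involved are nonzero. -/
theorem uq_bimodule_commute (N : ℕ) (hN : 2 ≤ N) (w1 w2 : ℂ) (h1 : w1 ≠ 0) (h2 : w2 ≠ 0)
    (hsin1 : Complex.sin (2 * (Real.pi : ℂ) * w1 / w2) ≠ 0)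
    (hsin2 : Complex.sin (2 * (Real.pi : ℂ) * w2 / w1) ≠ 0)
    (X Y : Op) (hX : IsGen N w1 w2 X) (hY : IsGenD N w1 w2 Y)
    (f : Pt → ℂ) (γ : Pt) (hγ : QGeneric2 N w1 w2 γ) :
    X (Y f) γ = Y (X f) γ := by
  obtain ⟨c, A, n, u, rfl, ⟨t, hu⟩, hAinv⟩ := repGen h2 hX
  obtain ⟨d, B, m, v, rfl, ⟨t', hv⟩, hBinv⟩ := repGenD h1 hY
  exact genOp_comm c d A B n m u v
    (fun j p1 p2 δ => by rw [hv]; exact hAinv t' j p1 p2 δ)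
    (fun k p1 p2 δ => by rw [hu]; exact hBinv t k p1 p2 δ) f γ
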